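/- arXiv:2503.16354 — 3 statements merged into one kernel-verified Lean document; each statement's English description precedes it below -/
import Mathlib

section
/- For p > 0 and a, b > 0, there exist positive constants c, C and N such that for all n ≥ N, c·(log(n+1))^b/(n+1)^{a+1} ≤ ∫₀¹ r^{pn+1}(1-r)^a (log(e/(1-r)))^b dr ≤ C·(log(n+1))^b/(n+1)^{a+1}. -/
open MeasureTheory Real Set

private lemma cont_rpow_const {c : ℝ} (hc : 0 ≤ c) : Continuous fun x : ℝ => x ^ c :=
  continuous_iff_continuousAt.2 fun x => Real.continuousAt_rpow_const x c (Or.inr hc)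

private lemma aux_M {a b t : ℝ} (ha : 0 < a) (hb : 0 < b) (ht : 0 < t) (ht1 : t ≤ 1) :
    t ^ a * (Real.log (Real.exp 1 / t)) ^ b ≤ (b / a) ^ b * Real.exp a := by
  have hx : (0:ℝ) < Real.exp 1 / t := by positivity
  have hL0 : 0 ≤ Real.log (Real.exp 1 / t) := by
    apply Real.log_nonneg
    rw [le_div_iff₀ ht]
    nlinarith [Real.one_le_exp (zero_le_one (α := ℝ))]
  have h1 : Real.log (Real.exp 1 / t) ≤ (b / a) * (Real.exp 1 / t) ^ (a / b) := by
    have h := Real.log_le_rpow_div hx.le (div_pos ha hb)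
    calc Real.log (Real.exp 1 / t) ≤ (Real.exp 1 / t) ^ (a / b) / (a / b) := h
      _ = (b / a) * (Real.exp 1 / t) ^ (a / b) := by
          rw [div_div_eq_mul_div]; ring
  have h2 : (Real.log (Real.exp 1 / t)) ^ b ≤ ((b / a) * (Real.exp 1 / t) ^ (a / b)) ^ b :=
    Real.rpow_le_rpow hL0 h1 hb.le
  have h3 : ((b / a) * (Real.exp 1 / t) ^ (a / b)) ^ b
      = (b / a) ^ b * ((Real.exp 1 / t) ^ (a / b)) ^ b :=
    Real.mul_rpow (by positivity) (by positivity)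
  have h4 : ((Real.exp 1 / t) ^ (a / b)) ^ b = (Real.exp 1 / t) ^ a := by
    rw [← Real.rpow_mul hx.le, div_mul_cancel₀ _ hb.ne']
  have h5 : (Real.exp 1 / t) ^ a = Real.exp a / t ^ a := by
    rw [Real.div_rpow (Real.exp_pos 1).le ht.le, Real.exp_one_rpow]
  have h6 : (Real.log (Real.exp 1 / t)) ^ b ≤ (b / a) ^ b * (Real.exp a / t ^ a) := by
    rw [← h5, ← h4, ← h3]; exact h2
  have hta : (0:ℝ) < t ^ a := Real.rpow_pos_of_pos ht a
  calc t ^ a * (Real.log (Real.exp 1 / t)) ^ b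
      ≤ t ^ a * ((b / a) ^ b * (Real.exp a / t ^ a)) :=
        mul_le_mul_of_nonneg_left h6 hta.le
    _ = (b / a) ^ b * Real.exp a := by field_simp

set_option maxHeartbeats 1000000 in
theorem stmt_2 (p a b : ℝ) (hp : 0 < p) (ha : 0 < a) (hb : 0 < b) :
    ∃ c C : ℝ, ∃ N : ℕ, 0 < c ∧ 0 < C ∧ ∀ n : ℕ, N ≤ n →
      c * (Real.log ((n : ℝ) + 1)) ^ b / ((n : ℝ) + 1) ^ (a + 1) ≤
        (∫ r in Set.Ioo (0 : ℝ) 1,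
          r ^ (p * n + 1) * (1 - r) ^ a * (Real.log (Real.exp 1 / (1 - r))) ^ b) ∧
      (∫ r in Set.Ioo (0 : ℝ) 1,
          r ^ (p * n + 1) * (1 - r) ^ a * (Real.log (Real.exp 1 / (1 - r))) ^ b) ≤
        C * (Real.log ((n : ℝ) + 1)) ^ b / ((n : ℝ) + 1) ^ (a + 1) := by
  set k : ℕ := ⌈a⌉₊ + 2 with hk
  have hka : a + 1 ≤ (k : ℝ) := by
    have := Nat.le_ceil a
    push_cast [hk]
    linarith
  set M : ℝ := (b / a) ^ b * Real.exp a with hM_def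
  have hM : 0 < M := by positivity
  refine ⟨Real.exp (-(2 * (p + 1))) / 2 ^ (a + 1),
    ((k : ℝ) + 1) ^ b * Real.Gamma (a + 1) * (2 / p) ^ (a + 1) + M, 2,
    by positivity, by positivity, ?_⟩
  intro n hn
  have hm2 : (2:ℝ) ≤ (n:ℝ) := by exact_mod_cast hn
  have hm1 : (0:ℝ) < (n:ℝ) + 1 := by linarith
  have hL1 : 1 ≤ Real.log ((n:ℝ) + 1) := by
    rw [Real.le_log_iff_exp_le (by linarith)]
    calc Real.exp 1 ≤ 2.7182818286 := Real.exp_one_lt_d9.le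
      _ ≤ (n:ℝ) + 1 := by linarith
  have hL0 : (0:ℝ) < Real.log ((n:ℝ) + 1) := lt_of_lt_of_le one_pos hL1
  set F : ℝ → ℝ :=
    fun r => r ^ (p * n + 1) * (1 - r) ^ a * (Real.log (Real.exp 1 / (1 - r))) ^ b with hF
  have hpn1 : (0:ℝ) ≤ p * n + 1 := by positivity
  have hpn : (0:ℝ) < p * n := mul_pos hp (by linarith)
  have hlogE : ∀ r : ℝ, 0 < r → r < 1 → 0 ≤ Real.log (Real.exp 1 / (1 - r)) := by
    intro r hr0 hr
    have h2 : (0:ℝ) < 1 - r := by linarith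
    apply Real.log_nonneg
    rw [le_div_iff₀ h2]
    nlinarith [Real.one_le_exp (zero_le_one (α := ℝ))]
  have hF_nonneg : ∀ r ∈ Ioo (0:ℝ) 1, 0 ≤ F r := by
    intro r hr
    have h2 : (0:ℝ) < 1 - r := by linarith [hr.2]
    have hl := hlogE r hr.1 hr.2
    have h1 : (0:ℝ) ≤ r := hr.1.le
    positivity
  have hF_le_M : ∀ r ∈ Ioo (0:ℝ) 1, F r ≤ M := by
    intro r hr
    have h2 : (0:ℝ) < 1 - r := by linarith [hr.2]
    have haux := aux_M ha hb h2 (by linarith [hr.1] : 1 - r ≤ 1)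
    have hr1 : r ^ (p * n + 1) ≤ 1 := Real.rpow_le_one hr.1.le hr.2.le hpn1
    have hnn : (0:ℝ) ≤ (1 - r) ^ a * (Real.log (Real.exp 1 / (1 - r))) ^ b := by
      have := hlogE r hr.1 hr.2
      positivity
    calc F r = r ^ (p * n + 1) * ((1 - r) ^ a * (Real.log (Real.exp 1 / (1 - r))) ^ b) := by
          rw [hF]; ring
      _ ≤ 1 * ((1 - r) ^ a * (Real.log (Real.exp 1 / (1 - r))) ^ b) :=
          mul_le_mul_of_nonneg_right hr1 hnn
      _ = (1 - r) ^ a * (Real.log (Real.exp 1 / (1 - r))) ^ b := one_mul _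
      _ ≤ M := haux
  have hF_cont : ContinuousOn F (Ioo (0:ℝ) 1) := by
    intro r hr
    have h2 : (0:ℝ) < 1 - r := by linarith [hr.2]
    apply ContinuousAt.continuousWithinAt
    have c1 : ContinuousAt (fun r : ℝ => r ^ (p * n + 1)) r :=
      Real.continuousAt_rpow_const r _ (Or.inr hpn1)
    have csub : ContinuousAt (fun r : ℝ => 1 - r) r :=
      (continuous_const.sub continuous_id).continuousAt
    have c2 : ContinuousAt (fun r : ℝ => (1 - r) ^ a) r :=
      (Real.continuousAt_rpow_const (1 - r) a (Or.inr ha.le)).comp csub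
    have cdiv : ContinuousAt (fun r : ℝ => Real.exp 1 / (1 - r)) r :=
      ContinuousAt.div continuousAt_const csub h2.ne'
    have c3 : ContinuousAt (fun r : ℝ => Real.log (Real.exp 1 / (1 - r))) r :=
      (Real.continuousAt_log (by positivity)).comp cdiv
    have c4 : ContinuousAt (fun r : ℝ => (Real.log (Real.exp 1 / (1 - r))) ^ b) r :=
      (Real.continuousAt_rpow_const _ b (Or.inr hb.le)).comp c3
    exact (c1.mul c2).mul c4
  have hF_int : IntegrableOn F (Ioo (0:ℝ) 1) := by
    apply Integrable.mono' (g := fun _ => M)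
      (integrableOn_const measure_Ioo_lt_top.ne)
      (hF_cont.aestronglyMeasurable measurableSet_Ioo)
    filter_upwards [ae_restrict_mem measurableSet_Ioo] with r hr
    rw [Real.norm_eq_abs, abs_of_nonneg (hF_nonneg r hr)]
    exact hF_le_M r hr
  constructor
  · -- LOWER BOUND
    set u : ℝ := ((n:ℝ) + 1)⁻¹ with hu_def
    have hu0 : 0 < u := by positivity
    have hum : u * ((n:ℝ) + 1) = 1 := inv_mul_cancel₀ hm1.ne'
    have hu3 : u ≤ 1/3 := by nlinarith
    set cn : ℝ := Real.exp (-(2 * (p + 1))) * (u / 2) ^ a * (Real.log ((n:ℝ) + 1)) ^ b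
      with hcn_def
    have hSsub : Icc (1 - u) (1 - u/2) ⊆ Ioo (0:ℝ) 1 := by
      intro r hr
      exact ⟨by linarith [hr.1], by linarith [hr.2]⟩
    have h_cn_le : ∀ r ∈ Icc (1 - u) (1 - u/2), cn ≤ F r := by
      intro r hr
      obtain ⟨hr1, hr2⟩ := hr
      have ht1 : u/2 ≤ 1 - r := by linarith
      have ht2 : 1 - r ≤ u := by linarith
      have hr0 : (0:ℝ) < r := by linarith
      have hrlt1 : r < 1 := by linarith
      have h2 : (0:ℝ) < 1 - r := by linarith
      -- factor 1
      have hlog1u : -(2*u) ≤ Real.log (1 - u) := by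
        have h1u : (0:ℝ) < 1 - u := by linarith
        have h := Real.log_le_sub_one_of_pos (inv_pos.2 h1u)
        rw [Real.log_inv] at h
        have hinv : (1 - u) * (1 - u)⁻¹ = 1 := mul_inv_cancel₀ h1u.ne'
        nlinarith
      have hfac1 : Real.exp (-(2 * (p + 1))) ≤ r ^ (p * n + 1) := by
        have e1 : (1 - u) ^ (p * n + 1) ≤ r ^ (p * n + 1) :=
          Real.rpow_le_rpow (by linarith) hr1 hpn1
        have e2 : Real.exp (-(2 * (p + 1))) ≤ (1 - u) ^ (p * n + 1) := by
          rw [Real.rpow_def_of_pos (by linarith : (0:ℝ) < 1 - u)]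
          apply Real.exp_le_exp.2
          have hmul : (-(2*u)) * (p * n + 1) ≤ Real.log (1 - u) * (p * n + 1) :=
            mul_le_mul_of_nonneg_right hlog1u hpn1
          have h3 : u * (p * (n:ℝ) + 1) ≤ p + 1 := by
            rw [hu_def, inv_mul_eq_div, div_le_iff₀ hm1]
            nlinarith
          have h4 : (-(2*u)) * (p * (n:ℝ) + 1) = -2*(u*(p*(n:ℝ)+1)) := by ring
          linarith
        linarith
      -- factor 2
      have hfac2 : (u/2) ^ a ≤ (1 - r) ^ a := Real.rpow_le_rpow (by positivity) ht1 ha.le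
      -- factor 3
      have hfac3 : (Real.log ((n:ℝ) + 1)) ^ b ≤ (Real.log (Real.exp 1 / (1 - r))) ^ b := by
        apply Real.rpow_le_rpow hL0.le ?_ hb.le
        apply Real.log_le_log hm1
        rw [le_div_iff₀ h2]
        have hmm : ((n:ℝ) + 1) * (1 - r) ≤ ((n:ℝ) + 1) * u :=
          mul_le_mul_of_nonneg_left ht2 hm1.le
        nlinarith [Real.one_le_exp (zero_le_one (α := ℝ))]
      have hnn1 : (0:ℝ) ≤ (u/2) ^ a := Real.rpow_nonneg (by positivity) a
      have hnn2 : (0:ℝ) ≤ r ^ (p * n + 1) := Real.rpow_nonneg hr0.le _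
      have hnn3 : (0:ℝ) ≤ (Real.log ((n:ℝ) + 1)) ^ b := Real.rpow_nonneg hL0.le b
      have hnn4 : (0:ℝ) ≤ (1 - r) ^ a := Real.rpow_nonneg h2.le a
      calc cn = (Real.exp (-(2 * (p + 1))) * (u/2) ^ a) * (Real.log ((n:ℝ) + 1)) ^ b := rfl
        _ ≤ (r ^ (p * n + 1) * (1 - r) ^ a) * (Real.log (Real.exp 1 / (1 - r))) ^ b := by
            apply mul_le_mul (mul_le_mul hfac1 hfac2 hnn1 hnn2) hfac3 hnn3
            exact mul_nonneg hnn2 hnn4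
        _ = F r := rfl
    have hvol : (volume (Icc (1 - u) (1 - u/2))).toReal = u/2 := by
      rw [Real.volume_Icc, ENNReal.toReal_ofReal (by linarith)]
      ring
    have hlow : cn * (u/2) ≤ ∫ r in Icc (1 - u) (1 - u/2), F r := by
      have h := setIntegral_ge_of_const_le measurableSet_Icc
        measure_Icc_lt_top.ne h_cn_le (hF_int.mono_set hSsub)
      rwa [measureReal_def, hvol, smul_eq_mul, mul_comm] at h
    have hmono : (∫ r in Icc (1 - u) (1 - u/2), F r) ≤ ∫ r in Ioo (0:ℝ) 1, F r := by
      apply setIntegral_mono_set hF_int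
      · filter_upwards [ae_restrict_mem measurableSet_Ioo] with r hr using hF_nonneg r hr
      · exact Filter.Eventually.of_forall fun r hr => hSsub hr
    have hkey : cn * (u/2)
        = Real.exp (-(2 * (p + 1))) / 2 ^ (a + 1) * (Real.log ((n:ℝ) + 1)) ^ b
          / ((n:ℝ) + 1) ^ (a + 1) := by
      have e1 : (u/2) ^ a * (u/2) = (u/2) ^ (a + 1) :=
        (Real.rpow_add_one (by positivity) a).symm
      have e2 : (u/2) ^ (a + 1) = u ^ (a + 1) / 2 ^ (a + 1) :=
        Real.div_rpow hu0.le (by norm_num) _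
      have e3 : u ^ (a + 1) = (((n:ℝ) + 1) ^ (a + 1))⁻¹ := by
        rw [hu_def, ← Real.inv_rpow hm1.le]
      have hne1 : ((n:ℝ) + 1) ^ (a + 1) ≠ 0 := (Real.rpow_pos_of_pos hm1 _).ne'
      have hne2 : (2:ℝ) ^ (a + 1) ≠ 0 := (Real.rpow_pos_of_pos two_pos _).ne'
      calc cn * (u/2)
          = Real.exp (-(2 * (p + 1))) * ((u/2) ^ a * (u/2)) * (Real.log ((n:ℝ) + 1)) ^ b := by
            rw [hcn_def]; ring
        _ = Real.exp (-(2 * (p + 1))) * ((((n:ℝ) + 1) ^ (a + 1))⁻¹ / 2 ^ (a + 1))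
              * (Real.log ((n:ℝ) + 1)) ^ b := by rw [e1, e2, e3]
        _ = Real.exp (-(2 * (p + 1))) / 2 ^ (a + 1) * (Real.log ((n:ℝ) + 1)) ^ b
              / ((n:ℝ) + 1) ^ (a + 1) := by field_simp
    rw [← hkey]
    exact le_trans hlow hmono
  · -- UPPER BOUND
    set δ : ℝ := ((n:ℝ) + 1) ^ (-(k:ℝ)) with hδ_def
    have hδ0 : 0 < δ := Real.rpow_pos_of_pos hm1 _
    have hδ1 : δ ≤ 1 := by
      apply Real.rpow_le_one_of_one_le_of_nonpos (by linarith)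
      simp
    have hδa : δ ≤ ((n:ℝ) + 1) ^ (-(a + 1)) :=
      Real.rpow_le_rpow_of_exponent_le (by linarith) (by linarith)
    set K : ℝ := ((k:ℝ) + 1) ^ b * (Real.log ((n:ℝ) + 1)) ^ b with hK_def
    have hK0 : (0:ℝ) ≤ K := by positivity
    set G : ℝ → ℝ := fun r => K * ((1 - r) ^ a * Real.exp (-(p * n * (1 - r))))
        + (Ioo (1 - δ) 1).indicator (fun _ => M) r with hG_def
    have h_fg : ∀ r ∈ Ioo (0:ℝ) 1, F r ≤ G r := by
      intro r hr
      have h2 : (0:ℝ) < 1 - r := by linarith [hr.2]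
      rcases le_or_gt δ (1 - r) with hc | hc
      · have hind : 0 ≤ (Ioo (1 - δ) 1).indicator (fun _ : ℝ => M) r :=
          Set.indicator_nonneg (fun _ _ => hM.le) r
        have hL : Real.log (Real.exp 1 / (1 - r)) ≤ ((k:ℝ) + 1) * Real.log ((n:ℝ) + 1) := by
          rw [Real.log_div (Real.exp_ne_zero 1) h2.ne', Real.log_exp]
          have h3 : Real.log δ ≤ Real.log (1 - r) := Real.log_le_log hδ0 hc
          have h4 : Real.log δ = -(k:ℝ) * Real.log ((n:ℝ) + 1) := by
            rw [hδ_def, Real.log_rpow hm1]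
          have hk0 : (0:ℝ) ≤ (k:ℝ) := Nat.cast_nonneg k
          nlinarith
        have hLb : (Real.log (Real.exp 1 / (1 - r))) ^ b ≤ K := by
          calc (Real.log (Real.exp 1 / (1 - r))) ^ b
              ≤ (((k:ℝ) + 1) * Real.log ((n:ℝ) + 1)) ^ b :=
                Real.rpow_le_rpow (hlogE r hr.1 hr.2) hL hb.le
            _ = K := by rw [Real.mul_rpow (by positivity) hL0.le]
        have hr_exp : r ^ (p * n + 1) ≤ Real.exp (-(p * n * (1 - r))) := by
          have s1 : r ^ (p * n + 1) ≤ r ^ (p * (n:ℝ)) :=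
            Real.rpow_le_rpow_of_exponent_ge hr.1 hr.2.le (by linarith)
          have s2 : r ^ (p * (n:ℝ)) = Real.exp (Real.log r * (p * n)) :=
            Real.rpow_def_of_pos hr.1 _
          have s3 : Real.log r ≤ r - 1 := Real.log_le_sub_one_of_pos hr.1
          have s4 : Real.log r * (p * n) ≤ -(p * n * (1 - r)) := by nlinarith [hpn.le]
          calc r ^ (p * n + 1) ≤ r ^ (p * (n:ℝ)) := s1
            _ = Real.exp (Real.log r * (p * n)) := s2
            _ ≤ Real.exp (-(p * n * (1 - r))) := Real.exp_le_exp.2 s4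
        have hstep : F r ≤ Real.exp (-(p * n * (1 - r))) * (1 - r) ^ a * K := by
          have hnnL : (0:ℝ) ≤ (Real.log (Real.exp 1 / (1 - r))) ^ b :=
            Real.rpow_nonneg (hlogE r hr.1 hr.2) b
          have hnna : (0:ℝ) ≤ (1 - r) ^ a := Real.rpow_nonneg h2.le a
          apply mul_le_mul (mul_le_mul hr_exp le_rfl hnna (Real.exp_pos _).le) hLb hnnL
          exact mul_nonneg (Real.exp_pos _).le hnna
        calc F r ≤ Real.exp (-(p * n * (1 - r))) * (1 - r) ^ a * K := hstep
          _ = K * ((1 - r) ^ a * Real.exp (-(p * n * (1 - r)))) := by ring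
          _ ≤ G r := le_add_of_nonneg_right hind
      · have hmem : r ∈ Ioo (1 - δ) 1 := ⟨by linarith, hr.2⟩
        have hival : (Ioo (1 - δ) 1).indicator (fun _ : ℝ => M) r = M :=
          Set.indicator_of_mem hmem _
        have hfst : 0 ≤ K * ((1 - r) ^ a * Real.exp (-(p * n * (1 - r)))) := by positivity
        calc F r ≤ M := hF_le_M r hr
          _ ≤ G r := by rw [hG_def]; simp only; rw [hival]; linarith
    have hG1_cont : Continuous fun r : ℝ => (1 - r) ^ a * Real.exp (-(p * n * (1 - r))) := by
      apply Continuous.mul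
      · exact (cont_rpow_const ha.le).comp (continuous_const.sub continuous_id)
      · exact Real.continuous_exp.comp (by fun_prop)
    have hG1_int : IntegrableOn (fun r : ℝ => (1 - r) ^ a * Real.exp (-(p * n * (1 - r))))
        (Ioo (0:ℝ) 1) :=
      (hG1_cont.integrableOn_Icc (a := 0) (b := 1)).mono_set Ioo_subset_Icc_self
    have hind_int : IntegrableOn ((Ioo (1 - δ) 1).indicator (fun _ : ℝ => M)) (Ioo (0:ℝ) 1) := by
      have hconst : IntegrableOn (fun _ : ℝ => M) (Ioo (0:ℝ) 1) :=
        integrableOn_const measure_Ioo_lt_top.ne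
      exact hconst.indicator measurableSet_Ioo
    have hG_int : IntegrableOn G (Ioo (0:ℝ) 1) := (hG1_int.const_mul K).add hind_int
    have step1 : (∫ r in Ioo (0:ℝ) 1, F r) ≤ ∫ r in Ioo (0:ℝ) 1, G r :=
      setIntegral_mono_on hF_int hG_int measurableSet_Ioo h_fg
    have hsplit : (∫ r in Ioo (0:ℝ) 1, G r)
        = K * (∫ r in Ioo (0:ℝ) 1, (1 - r) ^ a * Real.exp (-(p * n * (1 - r))))
          + ∫ r in Ioo (0:ℝ) 1, (Ioo (1 - δ) 1).indicator (fun _ : ℝ => M) r := by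
      rw [hG_def, integral_add (hG1_int.const_mul K) hind_int, integral_const_mul]
    have hind_val : (∫ r in Ioo (0:ℝ) 1, (Ioo (1 - δ) 1).indicator (fun _ : ℝ => M) r)
        ≤ M * δ := by
      rw [setIntegral_indicator measurableSet_Ioo, setIntegral_const, measureReal_def, smul_eq_mul, mul_comm]
      apply mul_le_mul_of_nonneg_left ?_ hM.le
      apply ENNReal.toReal_le_of_le_ofReal hδ0.le
      calc volume (Ioo (0:ℝ) 1 ∩ Ioo (1 - δ) 1) ≤ volume (Ioo (1 - δ) 1) :=
            measure_mono inter_subset_right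
        _ = ENNReal.ofReal (1 - (1 - δ)) := Real.volume_Ioo
        _ = ENNReal.ofReal δ := by ring_nf
    have hIoi_int : IntegrableOn (fun t : ℝ => t ^ a * Real.exp (-(p * n * t))) (Ioi (0:ℝ)) := by
      have h0 := integrableOn_rpow_mul_exp_neg_mul_rpow
        (show (-1:ℝ) < a by linarith) zero_lt_one hpn
      apply h0.congr_fun ?_ measurableSet_Ioi
      intro x hx
      simp only [Real.rpow_one, neg_mul]
    have hJrefl : (∫ r in Ioo (0:ℝ) 1, (1 - r) ^ a * Real.exp (-(p * n * (1 - r))))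
        = ∫ t in Ioo (0:ℝ) 1, t ^ a * Real.exp (-(p * n * t)) := by
      rw [← integral_Ioc_eq_integral_Ioo, ← integral_Ioc_eq_integral_Ioo,
        ← intervalIntegral.integral_of_le zero_le_one, ← intervalIntegral.integral_of_le zero_le_one]
      have h := intervalIntegral.integral_comp_sub_left (a := 0) (b := 1)
        (fun t : ℝ => t ^ a * Real.exp (-(p * n * t))) 1
      simpa using h
    have hval : (∫ t in Ioi (0:ℝ), t ^ a * Real.exp (-(p * n * t)))
        = (1 / (p * n)) ^ (a + 1) * Real.Gamma (a + 1) := by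
      have h := Real.integral_rpow_mul_exp_neg_mul_Ioi (show (0:ℝ) < a + 1 by linarith) hpn
      simpa using h
    have hJle : (∫ t in Ioo (0:ℝ) 1, t ^ a * Real.exp (-(p * n * t)))
        ≤ (1 / (p * n)) ^ (a + 1) * Real.Gamma (a + 1) := by
      rw [← hval]
      apply setIntegral_mono_set hIoi_int
      · filter_upwards [ae_restrict_mem measurableSet_Ioi] with t ht
        have : (0:ℝ) < t := ht
        positivity
      · exact Filter.Eventually.of_forall fun t ht => ht.1
    -- final combination
    have hinv_eq : ((n:ℝ) + 1) ^ (-(a + 1)) = (((n:ℝ) + 1) ^ (a + 1))⁻¹ :=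
      Real.rpow_neg hm1.le _
    have hJ2 : (1 / (p * (n:ℝ))) ^ (a + 1) ≤ (2 / p) ^ (a + 1) * (((n:ℝ) + 1) ^ (a + 1))⁻¹ := by
      have h1 : 1 / (p * (n:ℝ)) ≤ 2 / (p * ((n:ℝ) + 1)) := by
        rw [div_le_div_iff₀ (by positivity) (by positivity)]
        nlinarith
      have h2 : (1 / (p * (n:ℝ))) ^ (a + 1) ≤ (2 / (p * ((n:ℝ) + 1))) ^ (a + 1) :=
        Real.rpow_le_rpow (by positivity) h1 (by linarith)
      have h3 : (2 / (p * ((n:ℝ) + 1))) ^ (a + 1)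
          = (2 / p) ^ (a + 1) * (((n:ℝ) + 1) ^ (a + 1))⁻¹ := by
        rw [show (2:ℝ) / (p * ((n:ℝ) + 1)) = (2 / p) * ((n:ℝ) + 1)⁻¹ by
            field_simp,
          Real.mul_rpow (by positivity) (by positivity), Real.inv_rpow hm1.le]
      linarith [h2, h3.le, h3.ge]
    have hG0 : (0:ℝ) ≤ Real.Gamma (a + 1) := Real.Gamma_nonneg_of_nonneg (by linarith)
    have hLb1 : 1 ≤ (Real.log ((n:ℝ) + 1)) ^ b := Real.one_le_rpow hL1 hb.le
    have hinv0 : (0:ℝ) ≤ (((n:ℝ) + 1) ^ (a + 1))⁻¹ := by positivity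
    have hfinal : K * ((1 / (p * (n:ℝ))) ^ (a + 1) * Real.Gamma (a + 1)) + M * δ
        ≤ (((k:ℝ) + 1) ^ b * Real.Gamma (a + 1) * (2 / p) ^ (a + 1) + M)
          * (Real.log ((n:ℝ) + 1)) ^ b / ((n:ℝ) + 1) ^ (a + 1) := by
      have t1 : K * ((1 / (p * (n:ℝ))) ^ (a + 1) * Real.Gamma (a + 1))
          ≤ K * ((2 / p) ^ (a + 1) * (((n:ℝ) + 1) ^ (a + 1))⁻¹ * Real.Gamma (a + 1)) := by
        apply mul_le_mul_of_nonneg_left ?_ hK0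
        exact mul_le_mul_of_nonneg_right hJ2 hG0
      have t2 : M * δ ≤ M * ((Real.log ((n:ℝ) + 1)) ^ b * (((n:ℝ) + 1) ^ (a + 1))⁻¹) := by
        apply mul_le_mul_of_nonneg_left ?_ hM.le
        calc δ ≤ ((n:ℝ) + 1) ^ (-(a + 1)) := hδa
          _ = (((n:ℝ) + 1) ^ (a + 1))⁻¹ := hinv_eq
          _ = 1 * (((n:ℝ) + 1) ^ (a + 1))⁻¹ := (one_mul _).symm
          _ ≤ (Real.log ((n:ℝ) + 1)) ^ b * (((n:ℝ) + 1) ^ (a + 1))⁻¹ :=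
            mul_le_mul_of_nonneg_right hLb1 hinv0
      have teq : K * ((2 / p) ^ (a + 1) * (((n:ℝ) + 1) ^ (a + 1))⁻¹ * Real.Gamma (a + 1))
          + M * ((Real.log ((n:ℝ) + 1)) ^ b * (((n:ℝ) + 1) ^ (a + 1))⁻¹)
          = (((k:ℝ) + 1) ^ b * Real.Gamma (a + 1) * (2 / p) ^ (a + 1) + M)
            * (Real.log ((n:ℝ) + 1)) ^ b / ((n:ℝ) + 1) ^ (a + 1) := by
        rw [hK_def, div_eq_mul_inv]; ring
      linarith [t1, t2]
    calc (∫ r in Ioo (0:ℝ) 1, F r) ≤ ∫ r in Ioo (0:ℝ) 1, G r := step1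
      _ = K * (∫ r in Ioo (0:ℝ) 1, (1 - r) ^ a * Real.exp (-(p * n * (1 - r))))
          + ∫ r in Ioo (0:ℝ) 1, (Ioo (1 - δ) 1).indicator (fun _ : ℝ => M) r := hsplit
      _ ≤ K * ((1 / (p * (n:ℝ))) ^ (a + 1) * Real.Gamma (a + 1)) + M * δ := by
          have := hJrefl ▸ hJle
          have hKmul := mul_le_mul_of_nonneg_left (hJrefl ▸ hJle : (∫ r in Ioo (0:ℝ) 1,
            (1 - r) ^ a * Real.exp (-(p * n * (1 - r)))) ≤ (1 / (p * (n:ℝ))) ^ (a + 1)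
            * Real.Gamma (a + 1)) hK0
          linarith [hind_val]
      _ ≤ (((k:ℝ) + 1) ^ b * Real.Gamma (a + 1) * (2 / p) ^ (a + 1) + M)
            * (Real.log ((n:ℝ) + 1)) ^ b / ((n:ℝ) + 1) ^ (a + 1) := hfinal
end

section
/- Let φ(z) = 1 - |Re z| on the unit disc and 1 ≤ p < ∞. Then there is a constant C_p > 0 such that for every f ∈ A^p_φ and every z in the unit disc, |f(z)| ≤ C_p · (1-|z|)^{-2/p} · (1-|Re z|)^{-1/p} · ‖f‖_{A^p_φ}. -/
open MeasureTheory Metric Set Real Complex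
open scoped Real

lemma circleMVT {f : ℂ → ℂ} {c : ℂ} {s : ℝ} (hs : 0 < s)
    (hc : ContinuousOn f (Metric.closedBall c s))
    (hd : ∀ x ∈ Metric.ball c s, DifferentiableAt ℂ f x) :
    ∫ θ in (0:ℝ)..(2*π), f (circleMap c s θ) = (2*π : ℝ) • f c := by
  have h := Complex.circleIntegral_sub_inv_smul_of_differentiable_on_off_countable
    (R := s) (c := c) (w := c) (s := (∅ : Set ℂ)) Set.countable_empty
    (Metric.mem_ball_self hs) hc (by simpa using hd)
  rw [circleIntegral] at h
  have hrw : ∀ θ : ℝ, deriv (circleMap c s) θ • (circleMap c s θ - c)⁻¹ • f (circleMap c s θ)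
      = Complex.I • f (circleMap c s θ) := by
    intro θ
    have hne : circleMap 0 s θ ≠ 0 := by
      have : ‖circleMap 0 s θ‖ = |s| := norm_circleMap_zero s θ
      intro h0; rw [h0] at this; simp [abs_of_pos hs] at this; exact hs.ne' this.symm
    rw [deriv_circleMap, circleMap_sub_center, smul_eq_mul, smul_eq_mul, smul_eq_mul]
    field_simp
  rw [intervalIntegral.integral_congr (fun θ _ => hrw θ)] at h
  rw [intervalIntegral.integral_smul] at h
  have h2 : (2 * ↑π * Complex.I) • f c = Complex.I • ((2*π : ℝ) • f c) := by
    simp [smul_eq_mul]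
    ring
  rw [h2] at h
  exact smul_right_injective ℂ Complex.I_ne_zero h

lemma polar_symm_eq (p : ℝ × ℝ) : Complex.polarCoord.symm p = circleMap 0 p.1 p.2 := by
  rw [Complex.polarCoord_symm_apply, circleMap, Complex.exp_mul_I]
  push_cast
  ring

lemma continuous_circleMap_prod (c : ℂ) : Continuous (fun q : ℝ × ℝ => circleMap c q.1 q.2) := by
  unfold circleMap
  exact continuous_const.add ((Complex.continuous_ofReal.comp continuous_fst).mul
    (Complex.continuous_exp.comp ((Complex.continuous_ofReal.comp continuous_snd).mul
      continuous_const)))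

lemma areaMVT {f : ℂ → ℂ} {c : ℂ} {R : ℝ} (hR : 0 < R)
    (hc : ContinuousOn f (Metric.closedBall c R))
    (hd : ∀ x ∈ Metric.ball c R, DifferentiableAt ℂ f x) :
    ∫ w in Metric.ball c R, f w = (π * R^2 : ℝ) • f c := by
  -- translate to ball centered at 0
  have htrans : ∫ w in Metric.ball c R, f w = ∫ w in Metric.ball (0:ℂ) R, f (c + w) := by
    have hmp : MeasurePreserving (fun w : ℂ => c + w) volume volume :=
      measurePreserving_add_left volume c
    have hemb : MeasurableEmbedding (fun w : ℂ => c + w) :=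
      (MeasurableEquiv.addLeft c).measurableEmbedding
    have hpre : (fun w : ℂ => c + w) ⁻¹' (Metric.ball c R) = Metric.ball (0:ℂ) R := by
      ext w
      simp [Metric.mem_ball, dist_eq_norm, add_sub_cancel_left]
    rw [← hmp.setIntegral_preimage_emb hemb f (Metric.ball c R), hpre]
  rw [htrans]
  -- express as integral over ℝ² via polar coordinates
  have hpolar := Complex.integral_comp_polarCoord_symm
    (Set.indicator (Metric.ball (0:ℂ) R) (fun w => f (c + w)))
  rw [← integral_indicator measurableSet_ball, ← hpolar]
  -- rewrite the integrand using an indicator on ℝ × ℝ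
  have hS : MeasurableSet {q : ℝ × ℝ | |q.1| < R} := by
    have : {q : ℝ × ℝ | |q.1| < R} = (fun q : ℝ × ℝ => ‖q.1‖) ⁻¹' (Set.Iio R) := by
      ext q; simp [Real.norm_eq_abs]
    rw [this]
    exact measurable_fst.norm measurableSet_Iio
  have hind : ∀ p : ℝ × ℝ,
      p.1 • (Set.indicator (Metric.ball (0:ℂ) R) (fun w => f (c + w))) (Complex.polarCoord.symm p)
      = Set.indicator {q : ℝ × ℝ | |q.1| < R}
          (fun q => q.1 • f (circleMap c q.1 q.2)) p := by
    intro p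
    have hmem : Complex.polarCoord.symm p ∈ Metric.ball (0:ℂ) R ↔ |p.1| < R := by
      rw [mem_ball_zero_iff, Complex.norm_polarCoord_symm]
    have hcm : c + Complex.polarCoord.symm p = circleMap c p.1 p.2 := by
      rw [polar_symm_eq]
      simp [circleMap]
    by_cases h : |p.1| < R
    · rw [Set.indicator_of_mem (hmem.mpr h),
        Set.indicator_of_mem (show p ∈ {q : ℝ × ℝ | |q.1| < R} from h), hcm]
    · rw [Set.indicator_of_notMem (fun hh => h (hmem.mp hh)),
        Set.indicator_of_notMem (show p ∉ {q : ℝ × ℝ | |q.1| < R} from h), smul_zero]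
  rw [setIntegral_congr_fun polarCoord.open_target.measurableSet (fun p _ => hind p),
    setIntegral_indicator hS]
  have hTS : polarCoord.target ∩ {q : ℝ × ℝ | |q.1| < R}
      = (Set.Ioo 0 R) ×ˢ (Set.Ioo (-π) π) := by
    rw [polarCoord_target]
    ext ⟨a, b⟩
    simp only [Set.mem_inter_iff, Set.mem_prod, Set.mem_Ioi, Set.mem_Ioo, Set.mem_setOf_eq]
    constructor
    · rintro ⟨⟨ha, hb⟩, habs⟩
      exact ⟨⟨ha, by rwa [abs_of_pos ha] at habs⟩, hb⟩
    · rintro ⟨⟨ha, haR⟩, hb⟩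
      exact ⟨⟨ha, hb⟩, by rwa [abs_of_pos ha]⟩
  rw [hTS]
  -- now Fubini
  have hint : IntegrableOn (fun q : ℝ × ℝ => q.1 • f (circleMap c q.1 q.2))
      ((Set.Ioo 0 R) ×ˢ (Set.Ioo (-π) π)) volume := by
    refine MeasureTheory.IntegrableOn.mono_set ?_
      (Set.prod_mono Set.Ioo_subset_Icc_self Set.Ioo_subset_Icc_self)
    · apply ContinuousOn.integrableOn_compact (isCompact_Icc.prod isCompact_Icc)
      apply ContinuousOn.smul (continuous_fst.continuousOn)
      apply hc.comp
      · exact (continuous_circleMap_prod c).continuousOn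
      · intro q hq
        rw [Metric.mem_closedBall, dist_eq_norm, circleMap_sub_center,
          norm_circleMap_zero]
        rw [abs_le]
        constructor
        · linarith [hq.1.1]
        · exact hq.1.2
  rw [MeasureTheory.Measure.volume_eq_prod ℝ ℝ] at hint ⊢
  rw [MeasureTheory.setIntegral_prod _ hint]
  -- inner integral
  have hinner : ∀ a ∈ Set.Ioo (0:ℝ) R,
      ∫ b in Set.Ioo (-π) π, a • f (circleMap c a b) = (2 * π * a : ℝ) • f c := by
    intro a ha
    rw [integral_smul]
    have h1 : ∫ b in Set.Ioo (-π) π, f (circleMap c a b)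
        = ∫ b in (-π)..π, f (circleMap c a b) := by
      rw [intervalIntegral.integral_of_le (by linarith [Real.pi_pos]),
        integral_Ioc_eq_integral_Ioo]
    have hper : Function.Periodic (fun b => f (circleMap c a b)) (2*π) :=
      (periodic_circleMap c a).comp f
    have h2 : ∫ b in (-π)..π, f (circleMap c a b) = ∫ b in (0:ℝ)..(2*π), f (circleMap c a b) := by
      have h3 := hper.intervalIntegral_add_eq (-π) 0
      rw [show -π + 2*π = π by ring, zero_add] at h3
      exact h3
    rw [h1, h2, circleMVT ha.1 (hc.mono (Metric.closedBall_subset_closedBall ha.2.le))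
      (fun x hx => hd x (Metric.ball_subset_ball ha.2.le hx))]
    rw [smul_smul]
    congr 1
    ring
  rw [setIntegral_congr_fun measurableSet_Ioo hinner]
  rw [integral_smul_const]
  congr 1
  have : ∫ a in Set.Ioo (0:ℝ) R, (2 * π * a) = ∫ a in (0:ℝ)..R, (2 * π * a) := by
    rw [intervalIntegral.integral_of_le hR.le, integral_Ioc_eq_integral_Ioo]
  rw [this, intervalIntegral.integral_const_mul, integral_id]
  ring

lemma normSubMean {f : ℂ → ℂ} {c : ℂ} {R : ℝ} (hR : 0 < R)
    (hc : ContinuousOn f (Metric.closedBall c R))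
    (hd : ∀ x ∈ Metric.ball c R, DifferentiableAt ℂ f x) :
    ‖f c‖ * (π * R^2) ≤ ∫ w in Metric.ball c R, ‖f w‖ := by
  have h := areaMVT hR hc hd
  have h2 : ‖f c‖ * (π * R^2) = ‖∫ w in Metric.ball c R, f w‖ := by
    rw [h, norm_smul, Real.norm_of_nonneg (by positivity)]
    ring
  rw [h2]
  exact norm_integral_le_integral_norm _

lemma volBall (c : ℂ) {R : ℝ} (hR : 0 < R) :
    (volume (Metric.ball c R)).toReal = π * R^2 := by
  rw [Complex.volume_ball]
  rw [ENNReal.toReal_mul, ENNReal.toReal_pow, ENNReal.toReal_ofReal hR.le]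
  rw [ENNReal.coe_toReal, NNReal.coe_real_pi]
  ring

lemma holderStep {f : ℂ → ℂ} {c : ℂ} {R : ℝ} {p : ℝ} (hR : 0 < R) (hp : 1 ≤ p)
    (hc : ContinuousOn f (Metric.closedBall c R)) :
    ∫ w in Metric.ball c R, ‖f w‖
      ≤ (∫ w in Metric.ball c R, ‖f w‖ ^ p) ^ (1/p) * (π * R^2) ^ (1 - 1/p) := by
  haveI : IsFiniteMeasure (volume.restrict (Metric.ball c R)) := by
    constructor
    rw [Measure.restrict_apply_univ]
    exact measure_ball_lt_top
  have hmeas : AEStronglyMeasurable f (volume.restrict (Metric.ball c R)) :=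
    (hc.mono ball_subset_closedBall).aestronglyMeasurable measurableSet_ball
  rcases eq_or_lt_of_le hp with heq | hlt
  · rw [← heq]
    simp [Real.rpow_one]
  · set q := p / (p - 1) with hq
    have hpq : p.HolderConjugate q := Real.HolderConjugate.conjExponent hlt
    obtain ⟨M, hM⟩ := (isCompact_closedBall c R).exists_bound_of_continuousOn hc
    have hfmem : MemLp f (ENNReal.ofReal p) (volume.restrict (Metric.ball c R)) := by
      refine MemLp.of_bound hmeas M ?_
      exact (ae_restrict_iff' measurableSet_ball).2
        (ae_of_all _ fun w hw => hM w (ball_subset_closedBall hw))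
    have hgmem : MemLp (fun _ : ℂ => (1:ℂ)) (ENNReal.ofReal q)
        (volume.restrict (Metric.ball c R)) := memLp_const 1
    have hH := MeasureTheory.integral_mul_norm_le_Lp_mul_Lq hpq hfmem hgmem
    simp only [norm_one, mul_one, Real.one_rpow] at hH
    rw [setIntegral_const, smul_eq_mul, mul_one, measureReal_def, volBall c hR] at hH
    have hexp : 1/q = 1 - 1/p := by
      have := hpq.inv_add_inv_eq_one
      rw [one_div, one_div]
      linarith
    rwa [hexp] at hH

theorem stmt_4 (p : ℝ) (hp : 1 ≤ p) :
    ∃ C : ℝ, 0 < C ∧ ∀ f : ℂ → ℂ, DifferentiableOn ℂ f (Metric.ball 0 1) →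
      MeasureTheory.IntegrableOn (fun z : ℂ => ‖f z‖ ^ p * (1 - |z.re|)) (Metric.ball (0 : ℂ) 1) →
      ∀ z ∈ Metric.ball (0 : ℂ) 1,
        ‖f z‖ ≤ C * (1 - ‖z‖) ^ (-(2 / p)) * (1 - |z.re|) ^ (-(1 / p)) *
          ((1 / Real.pi) * ∫ w in Metric.ball (0 : ℂ) 1, ‖f w‖ ^ p * (1 - |w.re|)) ^ (1 / p) := by
  have hp0 : 0 < p := lt_of_lt_of_le zero_lt_one hp
  refine ⟨8, by norm_num, ?_⟩
  intro f hf hint z hz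
  set I := ∫ w in Metric.ball (0:ℂ) 1, ‖f w‖ ^ p * (1 - |w.re|) with hIdef
  have hz1 : ‖z‖ < 1 := mem_ball_zero_iff.mp hz
  set a := 1 - ‖z‖ with ha
  have ha0 : 0 < a := by rw [ha]; linarith
  set r := a / 2 with hrdef
  have hr0 : 0 < r := by positivity
  have hreabs : |z.re| ≤ ‖z‖ := by exact Complex.abs_re_le_norm z
  set b := 1 - |z.re| with hb
  have hb0 : 0 < b := by rw [hb]; linarith
  have hab : a ≤ b := by rw [ha, hb]; linarith
  have hsub : Metric.closedBall z r ⊆ Metric.ball (0:ℂ) 1 := by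
    intro w hw
    rw [Metric.mem_closedBall, dist_eq_norm] at hw
    rw [mem_ball_zero_iff]
    calc ‖w‖ = ‖w - z + z‖ := by ring_nf
      _ ≤ ‖w - z‖ + ‖z‖ := norm_add_le _ _
      _ ≤ r + ‖z‖ := by linarith
      _ < 1 := by rw [hrdef, ha]; linarith
  have hc : ContinuousOn f (Metric.closedBall z r) := hf.continuousOn.mono hsub
  have hd : ∀ x ∈ Metric.ball z r, DifferentiableAt ℂ f x := fun x hx =>
    hf.differentiableAt (isOpen_ball.mem_nhds (hsub (ball_subset_closedBall hx)))
  set A := π * r^2 with hA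
  have hA0 : 0 < A := by rw [hA]; positivity
  have step1 : ‖f z‖ * A ≤ ∫ w in Metric.ball z r, ‖f w‖ := normSubMean hr0 hc hd
  have step2 := holderStep hr0 hp hc
  set J := ∫ w in Metric.ball z r, ‖f w‖ ^ p with hJ
  have hJ0 : 0 ≤ J :=
    setIntegral_nonneg measurableSet_ball fun w _ => Real.rpow_nonneg (norm_nonneg _) p
  have hI0 : 0 ≤ I := by
    refine setIntegral_nonneg measurableSet_ball fun w hw => ?_
    have hw1 : ‖w‖ < 1 := mem_ball_zero_iff.mp hw
    have : |w.re| ≤ ‖w‖ := by exact Complex.abs_re_le_norm w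
    have : (0:ℝ) ≤ 1 - |w.re| := by linarith
    exact mul_nonneg (Real.rpow_nonneg (norm_nonneg _) p) this
  -- step 3
  have hfpcont : ContinuousOn (fun w => ‖f w‖ ^ p) (Metric.closedBall z r) := by
    apply ContinuousOn.rpow_const hc.norm
    intro x _; right; exact hp0.le
  have hintB : IntegrableOn (fun w => ‖f w‖ ^ p) (Metric.ball z r) :=
    (hfpcont.integrableOn_compact (isCompact_closedBall _ _)).mono_set ball_subset_closedBall
  have hball01 : Metric.ball z r ⊆ Metric.ball (0:ℂ) 1 :=
    ball_subset_closedBall.trans hsub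
  have hintW : IntegrableOn (fun w => ‖f w‖ ^ p * (1 - |w.re|)) (Metric.ball z r) :=
    hint.mono_set hball01
  have hpt : ∀ w ∈ Metric.ball z r, (b/2) * ‖f w‖ ^ p ≤ ‖f w‖ ^ p * (1 - |w.re|) := by
    intro w hw
    rw [Metric.mem_ball, dist_eq_norm] at hw
    have h1 : |w.re - z.re| ≤ ‖w - z‖ := by
      exact (Complex.abs_re_le_norm (w - z)).trans_eq' (by rw [Complex.sub_re])
    have h2 : |w.re| ≤ |z.re| + |w.re - z.re| := by
      calc |w.re| = |z.re + (w.re - z.re)| := by ring_nf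
        _ ≤ |z.re| + |w.re - z.re| := abs_add_le _ _
    have hrb : r ≤ b / 2 := by rw [hrdef]; linarith
    have h3 : b / 2 ≤ 1 - |w.re| := by
      have : |w.re| < |z.re| + r := by linarith
      rw [hb] at *
      linarith
    rw [mul_comm]
    exact mul_le_mul_of_nonneg_left h3 (Real.rpow_nonneg (norm_nonneg _) p)
  have step3 : (b/2) * J ≤ I := by
    have e1 : (b/2) * J = ∫ w in Metric.ball z r, (b/2) * ‖f w‖ ^ p := by
      rw [hJ, MeasureTheory.integral_const_mul]
    rw [e1]
    refine le_trans (setIntegral_mono_on (hintB.const_mul _) hintW measurableSet_ball hpt) ?_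
    refine setIntegral_mono_set hint ?_ (HasSubset.Subset.eventuallyLE hball01)
    refine (ae_restrict_iff' measurableSet_ball).2 (ae_of_all _ fun w hw => ?_)
    have hw1 : ‖w‖ < 1 := mem_ball_zero_iff.mp hw
    have : |w.re| ≤ ‖w‖ := by exact Complex.abs_re_le_norm w
    exact mul_nonneg (Real.rpow_nonneg (norm_nonneg _) p) (by linarith)
  have hJle : J ≤ (2/b) * I := by
    have e2 : J = (2/b) * ((b/2) * J) := by field_simp
    rw [e2]
    exact mul_le_mul_of_nonneg_left step3 (by positivity)
  set t := 1/p with ht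
  have ht0 : 0 ≤ t := by positivity
  have ht1 : t ≤ 1 := by rw [ht, div_le_one hp0]; exact hp
  rw [← hA] at step2
  have key1 : ‖f z‖ ≤ J ^ t * A ^ (-t) := by
    have hAe : A ^ ((1:ℝ) - t) = A * A ^ (-t) := by
      rw [show (1:ℝ) - t = 1 + (-t) by ring, Real.rpow_add hA0, Real.rpow_one]
    have h1 : ‖f z‖ * A ≤ (J ^ t * A ^ (-t)) * A := by
      have h2 : J ^ t * A ^ ((1:ℝ) - t) = (J ^ t * A ^ (-t)) * A := by rw [hAe]; ring
      calc ‖f z‖ * A ≤ J ^ t * A ^ ((1:ℝ) - t) := step1.trans step2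
        _ = (J ^ t * A ^ (-t)) * A := h2
    exact le_of_mul_le_mul_right h1 hA0
  have key2 : J ^ t ≤ ((2/b) * I) ^ t :=
    Real.rpow_le_rpow hJ0 hJle ht0
  have key3 : ‖f z‖ ≤ ((2/b) * I) ^ t * A ^ (-t) :=
    key1.trans (mul_le_mul_of_nonneg_right key2 (Real.rpow_nonneg hA0.le _))
  have hbase : (2/b) * I * A⁻¹ = 8 * (a^2)⁻¹ * b⁻¹ * ((1/π) * I) := by
    rw [hA, hrdef]
    have hπ : (0:ℝ) < π := Real.pi_pos
    field_simp
    ring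
  have ea : ((a^2)⁻¹ : ℝ) ^ t = a ^ (-(2/p)) := by
    have e : ((a^2)⁻¹ : ℝ) = a ^ (-2 : ℝ) := by
      rw [Real.rpow_neg ha0.le]
      congr 1
      rw [show ((2:ℝ)) = ((2:ℕ):ℝ) by norm_num, Real.rpow_natCast]
    rw [e, ← Real.rpow_mul ha0.le]
    congr 1
    rw [ht]
    ring
  have eb : (b⁻¹ : ℝ) ^ t = b ^ (-(1/p)) := by
    rw [Real.rpow_neg hb0.le, Real.inv_rpow hb0.le, ht]
  have h8 : (8:ℝ) ^ t ≤ 8 := by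
    calc (8:ℝ) ^ t ≤ (8:ℝ) ^ (1:ℝ) :=
      Real.rpow_le_rpow_of_exponent_le (by norm_num) ht1
    _ = 8 := Real.rpow_one 8
  have hπI : (0:ℝ) ≤ (1/π) * I := by
    have hpip := Real.pi_pos
    exact mul_nonneg (by positivity) hI0
  have h2bI : (0:ℝ) ≤ (2/b) * I := mul_nonneg (by positivity) hI0
  clear_value I a r b A J t
  clear step1 step2 hJle step3 hpt hintW hintB hfpcont hc hd hsub hint hf
  rw [ht]
  calc ‖f z‖ ≤ ((2/b) * I) ^ t * A ^ (-t) := key3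
    _ = ((2/b) * I * A⁻¹) ^ t := by
        rw [Real.rpow_neg hA0.le, ← Real.inv_rpow hA0.le,
          ← Real.mul_rpow (by positivity) (by positivity)]
    _ = (8 * (a^2)⁻¹ * b⁻¹ * ((1/π) * I)) ^ t := by rw [hbase]
    _ = (8:ℝ) ^ t * ((a^2)⁻¹) ^ t * (b⁻¹) ^ t * ((1/π) * I) ^ t := by
        rw [Real.mul_rpow (by positivity) hπI,
          Real.mul_rpow (by positivity) (by positivity),
          Real.mul_rpow (by norm_num) (by positivity)]
    _ = (8:ℝ) ^ t * a ^ (-(2/p)) * b ^ (-(1/p)) * ((1/π) * I) ^ (1/p) := by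
        rw [ea, eb, ht]
    _ ≤ 8 * a ^ (-(2/p)) * b ^ (-(1/p)) * ((1/π) * I) ^ (1/p) := by
        have h1 : (0:ℝ) ≤ a ^ (-(2/p)) := Real.rpow_nonneg ha0.le _
        have h2 : (0:ℝ) ≤ b ^ (-(1/p)) := Real.rpow_nonneg hb0.le _
        have h3 : (0:ℝ) ≤ ((1/π) * I) ^ (1/p) := Real.rpow_nonneg hπI _
        have := mul_le_mul_of_nonneg_right (mul_le_mul_of_nonneg_right
          (mul_le_mul_of_nonneg_right h8 h1) h2) h3
        linarith
end

section
/- For 1 ≤ p < ∞ and α > 0, with weight φ(r) = (1-r)^{-1}(log(e/(1-r)))^{-(1+α)}, there exist positive constants c, C and N such that for all n ≥ N, c·(log(n+1))^{-α} ≤ ∫₀¹ r^{pn+1}(1-r)^{-1}(log(e/(1-r)))^{-(α+1)} dr ≤ C·(log(n+1))^{-α}. -/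
open MeasureTheory Real Set Filter Topology

noncomputable def Haux (α : ℝ) (r : ℝ) : ℝ :=
  if r < 1 then -(1 - Real.log (1 - r)) ^ (-α) / α else 0

noncomputable def Gaux (α : ℝ) (r : ℝ) : ℝ :=
  (1 - r)⁻¹ * (1 - Real.log (1 - r)) ^ (-(α + 1))

lemma base_pos {r : ℝ} (h0 : 0 ≤ r) (h1 : r < 1) : 1 ≤ 1 - Real.log (1 - r) := by
  have : Real.log (1 - r) ≤ 0 := Real.log_nonpos (by linarith) (by linarith)
  linarith

lemma Haux_deriv {α : ℝ} (hα : 0 < α) {r : ℝ} (h0 : 0 ≤ r) (hr : r < 1) :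
    HasDerivAt (Haux α) (Gaux α r) r := by
  have h1r : (0:ℝ) < 1 - r := by linarith
  have hu : HasDerivAt (fun s : ℝ => 1 - Real.log (1 - s)) ((1 - r)⁻¹) r := by
    have h0 : HasDerivAt (fun s : ℝ => 1 - s) (-1) r := by
      simpa using (hasDerivAt_id r).const_sub 1
    have h2 : HasDerivAt (fun s : ℝ => Real.log (1 - s)) (-1 / (1 - r)) r :=
      h0.log h1r.ne'
    have := h2.const_sub 1
    refine this.congr_deriv (Eq.symm ?_)
    ring
  have hune : (1 : ℝ) - Real.log (1 - r) ≠ 0 := by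
    have := base_pos h0 hr; linarith
  have h3 : HasDerivAt (fun s : ℝ => -(1 - Real.log (1 - s)) ^ (-α) / α)
      (Gaux α r) r := by
    have h4 := (hu.rpow_const (p := -α) (Or.inl hune)).neg.div_const α
    refine h4.congr_deriv (Eq.symm ?_)
    rw [Gaux, show -α - 1 = -(α+1) by ring]
    field_simp
  apply h3.congr_of_eventuallyEq
  filter_upwards [Iio_mem_nhds hr] with s hs
  simp only [Haux, if_pos (show s < 1 from hs)]

lemma Haux_cont {α : ℝ} (hα : 0 < α) {a : ℝ} (ha : 0 ≤ a) :
    ContinuousOn (Haux α) (Icc a 1) := by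
  intro x hx
  rcases lt_or_eq_of_le hx.2 with h1 | h1
  · exact ((Haux_deriv hα (ha.trans hx.1) h1).continuousAt).continuousWithinAt
  · -- x = 1
    subst h1
    have key : Tendsto (fun r : ℝ => 1 - Real.log (1 - r)) (𝓝[<] (1:ℝ)) atTop := by
      have h2 : Tendsto (fun r : ℝ => 1 - r) (𝓝[<] (1:ℝ)) (𝓝[>] 0) := by
        apply tendsto_nhdsWithin_of_tendsto_nhds_of_eventually_within
        · have : Tendsto (fun r : ℝ => 1 - r) (𝓝 (1:ℝ)) (𝓝 (1 - 1)) :=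
            (tendsto_const_nhds.sub tendsto_id)
          simpa using this.mono_left nhdsWithin_le_nhds
        · filter_upwards [self_mem_nhdsWithin] with r hr
          simp only [mem_Iio] at hr
          simp [mem_Ioi]; linarith
      have h3 : Tendsto (fun r : ℝ => Real.log (1 - r)) (𝓝[<] (1:ℝ)) atBot :=
        Real.tendsto_log_nhdsGT_zero.comp h2
      have h4 : Tendsto (fun r : ℝ => -Real.log (1 - r)) (𝓝[<] (1:ℝ)) atTop :=
        tendsto_neg_atBot_atTop.comp h3
      have h5 := tendsto_atTop_add_const_left (𝓝[<] (1:ℝ)) (1:ℝ) h4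
      simpa [sub_eq_add_neg] using h5
    have key2 : Tendsto (Haux α) (𝓝[<] (1:ℝ)) (𝓝 0) := by
      have h4 : Tendsto (fun r : ℝ => -(1 - Real.log (1 - r)) ^ (-α) / α) (𝓝[<] (1:ℝ)) (𝓝 0) := by
        have := ((tendsto_rpow_neg_atTop hα).comp key).neg.div_const α
        simpa using this
      apply h4.congr'
      filter_upwards [self_mem_nhdsWithin] with r hr
      simp only [mem_Iio] at hr
      simp [Haux, if_pos hr]
    have hcw : ContinuousWithinAt (Haux α) (Iio 1) 1 := by
      rw [ContinuousWithinAt]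
      simpa [Haux] using key2
    have hcw2 : ContinuousWithinAt (Haux α) (Iic 1) 1 := by
      rw [← continuousWithinAt_diff_self, Iic_diff_right]
      exact hcw
    exact hcw2.mono (Icc_subset_Iic_self)

lemma Gaux_nonneg {α r : ℝ} (h0 : 0 ≤ r) (h1 : r < 1) : 0 ≤ Gaux α r := by
  apply mul_nonneg
  · rw [inv_nonneg]; linarith
  · exact Real.rpow_nonneg (by have := base_pos h0 h1; linarith) _

lemma Gaux_integrableOn {α : ℝ} (hα : 0 < α) {a b : ℝ} (ha : 0 ≤ a) (hb : b ≤ 1) (hab : a ≤ b) :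
    IntegrableOn (Gaux α) (Ioc a b) := by
  apply intervalIntegral.integrableOn_deriv_of_nonneg
  · exact (Haux_cont hα ha).mono (Icc_subset_Icc_right hb)
  · exact fun x hx => Haux_deriv hα (ha.trans hx.1.le) (lt_of_lt_of_le hx.2 hb)
  · exact fun x hx => Gaux_nonneg (ha.trans hx.1.le) (lt_of_lt_of_le hx.2 hb)

lemma Gaux_integral {α : ℝ} (hα : 0 < α) {a b : ℝ} (ha : 0 ≤ a) (hb : b ≤ 1) (hab : a ≤ b) :
    ∫ r in Ioo a b, Gaux α r = Haux α b - Haux α a := by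
  rw [← integral_Ioc_eq_integral_Ioo, ← intervalIntegral.integral_of_le hab]
  exact intervalIntegral.integral_eq_sub_of_hasDerivAt_of_le hab
    ((Haux_cont hα ha).mono (Icc_subset_Icc_right hb))
    (fun x hx => Haux_deriv hα (ha.trans hx.1.le) (lt_of_lt_of_le hx.2 hb))
    ((intervalIntegrable_iff_integrableOn_Ioc_of_le hab).mpr (Gaux_integrableOn hα ha hb hab))

noncomputable def Fx (p α : ℝ) (n : ℕ) (r : ℝ) : ℝ :=
  r ^ (p * n + 1) * (1 - r) ^ (-(1 : ℝ)) * (Real.log (Real.exp 1 / (1 - r))) ^ (-(α + 1))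

lemma Fx_eq (p α : ℝ) (n : ℕ) {r : ℝ} (h1 : r < 1) :
    Fx p α n r = r ^ (p * n + 1) * Gaux α r := by
  have h1r : (0:ℝ) < 1 - r := by linarith
  rw [Fx, Gaux, Real.rpow_neg_one, Real.log_div (Real.exp_ne_zero 1) h1r.ne', Real.log_exp,
    mul_assoc]

lemma Fx_exp_nonneg {p : ℝ} (hp : 1 ≤ p) (n : ℕ) : 0 ≤ p * n + 1 := by
  have : (0:ℝ) ≤ n := Nat.cast_nonneg n
  nlinarith

lemma Fx_nonneg {p α : ℝ} (hp : 1 ≤ p) (n : ℕ) {r : ℝ} (h0 : 0 ≤ r) (h1 : r < 1) :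
    0 ≤ Fx p α n r := by
  rw [Fx_eq p α n h1]
  exact mul_nonneg (Real.rpow_nonneg h0 _) (Gaux_nonneg h0 h1)

lemma Fx_le_Gaux {p α : ℝ} (hp : 1 ≤ p) (n : ℕ) {r : ℝ} (h0 : 0 ≤ r) (h1 : r < 1) :
    Fx p α n r ≤ Gaux α r := by
  rw [Fx_eq p α n h1]
  have := Real.rpow_le_one h0 h1.le (Fx_exp_nonneg hp n)
  nth_rewrite 2 [← one_mul (Gaux α r)]
  exact mul_le_mul_of_nonneg_right this (Gaux_nonneg h0 h1)

lemma Fx_contOn (p α : ℝ) (n : ℕ) : ContinuousOn (Fx p α n) (Ioo 0 1) := by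
  have h1 : ContinuousOn (fun r : ℝ => r ^ (p * n + 1)) (Ioo (0:ℝ) 1) :=
    continuousOn_id.rpow_const (fun r hr => Or.inl (ne_of_gt hr.1))
  have h2 : ContinuousOn (fun r : ℝ => (1 - r) ^ (-(1:ℝ))) (Ioo (0:ℝ) 1) :=
    (continuousOn_const.sub continuousOn_id).rpow_const
      (fun r hr => Or.inl (by have := hr.2; intro h; simp only [Pi.sub_apply, id] at h; linarith))
  have h3 : ContinuousOn (fun r : ℝ => (Real.log (Real.exp 1 / (1 - r))) ^ (-(α + 1)))
      (Ioo (0:ℝ) 1) := by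
    apply ContinuousOn.rpow_const
    · apply ContinuousOn.log
      · exact continuousOn_const.div (continuousOn_const.sub continuousOn_id)
          (fun r hr => by have := hr.2; intro h; rw [sub_eq_zero] at h; linarith)
      · intro r hr
        have h1r : (0:ℝ) < 1 - r := by linarith [hr.2]
        positivity
    · intro r hr
      left
      have h1r : (0:ℝ) < 1 - r := by linarith [hr.2]
      rw [Real.log_div (Real.exp_ne_zero 1) h1r.ne', Real.log_exp]
      have := base_pos hr.1.le hr.2
      linarith
  exact (h1.mul h2).mul h3

lemma Fx_integrableOn {p α : ℝ} (hp : 1 ≤ p) (hα : 0 < α) (n : ℕ) :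
    IntegrableOn (Fx p α n) (Ioo 0 1) := by
  apply Integrable.mono' ((Gaux_integrableOn hα le_rfl le_rfl zero_le_one).mono_set
    Ioo_subset_Ioc_self)
  · exact (Fx_contOn p α n).aestronglyMeasurable measurableSet_Ioo
  · rw [ae_restrict_iff' measurableSet_Ioo]
    filter_upwards with r hr
    rw [Real.norm_eq_abs, abs_of_nonneg (Fx_nonneg hp n hr.1.le hr.2)]
    exact Fx_le_Gaux hp n hr.1.le hr.2

lemma exp_neg_two_mul_le {x : ℝ} (h0 : 0 ≤ x) (h1 : x ≤ 1/2) : Real.exp (-(2*x)) ≤ 1 - x := by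
  have hab : Real.exp (-(2*x)) * Real.exp (2*x) = 1 := by
    rw [← Real.exp_add]; ring_nf; exact Real.exp_zero
  nlinarith [Real.add_one_le_exp (2*x), Real.exp_pos (-(2*x)), Real.exp_pos (2*x)]

lemma log_succ_le {n : ℕ} (hn : 1 ≤ n) : Real.log ((n:ℝ) + 1) ≤ 1 + Real.log n := by
  have hn0 : (0:ℝ) < n := by exact_mod_cast hn
  have h1 : Real.log ((n:ℝ) + 1) ≤ Real.log (Real.exp 1 * n) := by
    apply Real.log_le_log (by linarith)
    have he : (2:ℝ) ≤ Real.exp 1 := by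
      have := Real.add_one_le_exp (1:ℝ); linarith
    have : (n:ℝ) + 1 ≤ 2 * n := by
      have : (1:ℝ) ≤ n := by exact_mod_cast hn
      linarith
    nlinarith
  rwa [Real.log_mul (Real.exp_ne_zero 1) hn0.ne', Real.log_exp] at h1

lemma one_le_log_succ {n : ℕ} (hn : 2 ≤ n) : 1 ≤ Real.log ((n:ℝ) + 1) := by
  have hn0 : (3:ℝ) ≤ (n:ℝ) + 1 := by
    have : (2:ℝ) ≤ n := by exact_mod_cast hn
    linarith
  rw [Real.le_log_iff_exp_le (by linarith)]
  have := Real.exp_one_lt_d9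
  linarith

lemma eventually_small {α : ℝ} (hα : 0 < α) :
    ∀ᶠ n : ℕ in atTop,
      Real.sqrt n * Real.exp (-Real.sqrt n) * (Real.log ((n:ℝ) + 1)) ^ α ≤ 1 := by
  have h1 : Tendsto (fun x : ℝ => x ^ (1 + 2*α) * Real.exp (-1 * x)) atTop (𝓝 0) :=
    tendsto_rpow_mul_exp_neg_mul_atTop_nhds_zero _ 1 one_pos
  have hsqrt : Tendsto Real.sqrt atTop atTop := by
    apply (tendsto_rpow_atTop (y := (1/2:ℝ)) (by norm_num)).congr'
    filter_upwards [eventually_ge_atTop (0:ℝ)] with x _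
    rw [Real.sqrt_eq_rpow]
  have hsq : Tendsto (fun n : ℕ => Real.sqrt n) atTop atTop :=
    hsqrt.comp tendsto_natCast_atTop_atTop
  have h2 := (h1.comp hsq).const_mul ((2:ℝ)^α)
  rw [mul_zero] at h2
  filter_upwards [h2.eventually_le_const one_pos, eventually_ge_atTop 1] with n hn hn1
  refine le_trans ?_ hn
  simp only [Function.comp]
  set x := Real.sqrt (n:ℝ) with hxdef
  have hn0 : (0:ℝ) < n := by exact_mod_cast hn1
  have hx0 : 0 < x := Real.sqrt_pos.mpr hn0
  have hxx : x * x = (n:ℝ) := Real.mul_self_sqrt hn0.le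
  have hlog : Real.log ((n:ℝ) + 1) ≤ 2 * n := by
    have := Real.log_le_sub_one_of_pos (show (0:ℝ) < (n:ℝ)+1 by linarith)
    linarith
  have hstep : (Real.log ((n:ℝ)+1)) ^ α ≤ ((2:ℝ)*n) ^ α :=
    Real.rpow_le_rpow (Real.log_nonneg (by linarith)) hlog hα.le
  calc x * Real.exp (-x) * (Real.log ((n:ℝ)+1)) ^ α
      ≤ x * Real.exp (-x) * (((2:ℝ)*n) ^ α) := by
        apply mul_le_mul_of_nonneg_left hstep (by positivity)
    _ = 2 ^ α * (x ^ (1 + 2*α) * Real.exp (-1 * x)) := by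
        rw [Real.mul_rpow (by norm_num) hn0.le, ← hxx, Real.mul_rpow hx0.le hx0.le,
          show (1:ℝ) + 2*α = 1 + (α + α) by ring, Real.rpow_add hx0, Real.rpow_add hx0,
          Real.rpow_one]
        ring

lemma Haux_val (α : ℝ) {t : ℝ} (ht : 0 < t) :
    Haux α (1 - t) = -(1 - Real.log t) ^ (-α) / α := by
  have h : (1:ℝ) - t < 1 := by linarith
  simp only [Haux, if_pos h, sub_sub_cancel]

lemma Haux_one (α : ℝ) : Haux α 1 = 0 := by simp [Haux]

set_option maxHeartbeats 2000000 in
theorem stmt_18 (p α : ℝ) (hp : 1 ≤ p) (hα : 0 < α) :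
    ∃ c C : ℝ, ∃ N : ℕ, 0 < c ∧ 0 < C ∧ ∀ n : ℕ, N ≤ n →
      c * (Real.log ((n : ℝ) + 1)) ^ (-α) ≤
        (∫ r in Set.Ioo (0 : ℝ) 1,
          r ^ (p * n + 1) * (1 - r) ^ (-(1 : ℝ)) * (Real.log (Real.exp 1 / (1 - r))) ^ (-(α + 1))) ∧
      (∫ r in Set.Ioo (0 : ℝ) 1,
          r ^ (p * n + 1) * (1 - r) ^ (-(1 : ℝ)) * (Real.log (Real.exp 1 / (1 - r))) ^ (-(α + 1))) ≤
        C * (Real.log ((n : ℝ) + 1)) ^ (-α) := by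
  obtain ⟨N₀, hN₀⟩ := Filter.eventually_atTop.mp (eventually_small hα)
  have hk1 : (3/2:ℝ) ^ (-α) < 1 := Real.rpow_lt_one_of_one_lt_of_neg (by norm_num) (by linarith)
  have hk0 : (0:ℝ) < (3/2:ℝ) ^ (-α) := Real.rpow_pos_of_pos (by norm_num) _
  refine ⟨Real.exp (-(2*(p+1))) * (1 - (3/2:ℝ)^(-α)) * (2:ℝ)^(-α) / α,
          1 + (2:ℝ)^α/α + 1/α, max N₀ 3, ?_, ?_, ?_⟩
  · apply div_pos ?_ hα
    apply mul_pos (mul_pos (Real.exp_pos _) (by linarith))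
      (Real.rpow_pos_of_pos (by norm_num) _)
  · have := Real.rpow_pos_of_pos (show (0:ℝ) < 2 by norm_num) α
    positivity
  intro n hn
  have hn3 : 3 ≤ n := le_trans (le_max_right _ _) hn
  have hsmall := hN₀ n (le_trans (le_max_left _ _) hn)
  set nn : ℝ := (n : ℝ) with hnn
  have hn3' : (3:ℝ) ≤ nn := by rw [hnn]; exact_mod_cast hn3
  set sq : ℝ := Real.sqrt nn with hsq
  have hsq1 : 1 < sq := by
    rw [hsq]
    apply Real.lt_sqrt_of_sq_lt; nlinarith
  have hsq0 : 0 < sq := by linarith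
  have hsqn : sq ≤ nn := by
    rw [hsq]
    calc Real.sqrt nn ≤ Real.sqrt (nn^2) := Real.sqrt_le_sqrt (by nlinarith)
      _ = nn := Real.sqrt_sq (by linarith)
  set b₁ : ℝ := 1 - 1/sq with hb₁def
  set b₂ : ℝ := 1 - 1/nn with hb₂def
  set b₃ : ℝ := 1 - 1/nn^2 with hb₃def
  have hb₁0 : 0 < b₁ := by
    rw [hb₁def]; have : 1/sq < 1 := by rw [div_lt_one hsq0]; exact hsq1
    linarith
  have hb₁1 : b₁ < 1 := by rw [hb₁def]; have : 0 < 1/sq := by positivity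
                           linarith
  have hb₁₂ : b₁ ≤ b₂ := by
    rw [hb₁def, hb₂def]
    have : 1/nn ≤ 1/sq := by apply div_le_div_of_nonneg_left one_pos.le hsq0 hsqn
    linarith
  have hb₂0 : 0 < b₂ := lt_of_lt_of_le hb₁0 hb₁₂
  have hb₂1 : b₂ < 1 := by rw [hb₂def]; have : 0 < 1/nn := by positivity
                           linarith
  have hb₂₃ : b₂ < b₃ := by
    rw [hb₂def, hb₃def]
    have : 1/nn^2 < 1/nn := by
      apply div_lt_div_of_pos_left one_pos (by positivity); nlinarith
    linarith
  have hb₃1 : b₃ < 1 := by rw [hb₃def]; have : 0 < 1/nn^2 := by positivity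
                           linarith
  set T : ℝ := Real.log (nn + 1) ^ (-α) with hT
  have hlog1 : 1 ≤ Real.log (nn + 1) := one_le_log_succ (by omega)
  have hlogpos : 0 < Real.log (nn + 1) := by linarith
  have hT0 : 0 < T := Real.rpow_pos_of_pos hlogpos _
  have hFint := Fx_integrableOn hp hα n
  have hGint := Gaux_integrableOn hα le_rfl le_rfl zero_le_one
  have hIoo01 : ∫ r in Ioo (0:ℝ) 1, Fx p α n r =
      ∫ r in Set.Ioo (0 : ℝ) 1,
        r ^ (p * n + 1) * (1 - r) ^ (-(1 : ℝ)) *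
          (Real.log (Real.exp 1 / (1 - r))) ^ (-(α + 1)) := rfl
  rw [← hIoo01]
  -- log values
  have hlogb1 : (1:ℝ) - Real.log (1/sq) = 1 + Real.log nn / 2 := by
    rw [one_div, Real.log_inv, hsq, Real.log_sqrt (by linarith)]; ring
  have hlogb2 : (1:ℝ) - Real.log (1/nn) = 1 + Real.log nn := by
    rw [one_div, Real.log_inv]; ring
  have hlogb3 : (1:ℝ) - Real.log (1/nn^2) = 1 + 2 * Real.log nn := by
    rw [one_div, Real.log_inv, Real.log_pow]; push_cast; ring
  set s : ℝ := Real.log nn with hsdef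
  have hs1 : 1 ≤ s := by
    rw [hsdef, Real.le_log_iff_exp_le (by linarith)]
    have := Real.exp_one_lt_d9; linarith
  have hslog : s ≤ Real.log (nn + 1) := Real.log_le_log (by linarith) (by linarith)
  have hHb₁ : Haux α b₁ = -(1 + s/2) ^ (-α) / α := by
    rw [hb₁def, Haux_val α (by positivity), hlogb1, hsdef]
  have hHb₂ : Haux α b₂ = -(1 + s) ^ (-α) / α := by
    rw [hb₂def, Haux_val α (by positivity), hlogb2, hsdef]
  have hHb₃ : Haux α b₃ = -(1 + 2*s) ^ (-α) / α := by
    rw [hb₃def, Haux_val α (by positivity), hlogb3, hsdef]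
  constructor
  · -- LOWER BOUND
    set c₀ : ℝ := Real.exp (-(2*(p+1))) with hc₀
    have hc₀0 : 0 < c₀ := Real.exp_pos _
    have hsub : Ioo b₂ b₃ ⊆ Ioo (0:ℝ) 1 := fun x hx => ⟨lt_trans hb₂0 hx.1, lt_trans hx.2 hb₃1⟩
    have hGint23 : IntegrableOn (Gaux α) (Ioo b₂ b₃) :=
      hGint.mono_set (fun x hx => ⟨lt_trans hb₂0 hx.1, (lt_trans hx.2 hb₃1).le⟩)
    have hFint23 : IntegrableOn (Fx p α n) (Ioo b₂ b₃) := hFint.mono_set hsub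
    have hptw : ∀ r ∈ Ioo b₂ b₃, c₀ * Gaux α r ≤ Fx p α n r := by
      intro r hr
      have hr0 : (0:ℝ) < r := lt_trans hb₂0 hr.1
      have hr1 : r < 1 := lt_trans hr.2 hb₃1
      rw [Fx_eq p α n hr1]
      apply mul_le_mul_of_nonneg_right ?_ (Gaux_nonneg hr0.le hr1)
      rw [Real.rpow_def_of_pos hr0, hc₀]
      apply Real.exp_le_exp.mpr
      have hnn0 : (0:ℝ) < nn := by linarith
      have hlogr : -(2/nn) ≤ Real.log r := by
        have hb2r : Real.log b₂ ≤ Real.log r := Real.log_le_log hb₂0 hr.1.le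
        have hexpb : Real.exp (-(2*(1/nn))) ≤ b₂ := by
          rw [hb₂def]
          apply exp_neg_two_mul_le (by positivity)
          rw [div_le_div_iff₀ hnn0 (by norm_num)]; linarith
        have := (Real.le_log_iff_exp_le hb₂0).mpr hexpb
        rw [mul_one_div] at this
        linarith
      have he0 : 0 ≤ p * (n:ℝ) + 1 := Fx_exp_nonneg hp n
      have h1 : -(2/nn) * (p*nn+1) ≤ Real.log r * (p*nn+1) :=
        mul_le_mul_of_nonneg_right hlogr he0
      have h2 : -(2*(p+1)) ≤ -(2/nn) * (p*nn+1) := by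
        have hkey : (2/nn) * (p*nn+1) ≤ 2*(p+1) := by
          rw [div_mul_eq_mul_div, div_le_iff₀ hnn0]; nlinarith
        linarith
      linarith
    calc Real.exp (-(2 * (p + 1))) * (1 - (3 / 2) ^ (-α)) * 2 ^ (-α) / α * T
        = c₀ * ((1 - (3/2:ℝ)^(-α)) * ((2:ℝ)^(-α) * T)) / α := by rw [hc₀]; ring
      _ ≤ c₀ * ((1+s)^(-α) - (1+2*s)^(-α)) / α := by
          have hA : (2:ℝ)^(-α) * T ≤ (1+s)^(-α) := by
            have h2T : ((2:ℝ) * Real.log (nn+1))^(-α) ≤ (1+s)^(-α) :=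
              Real.rpow_le_rpow_of_nonpos (by linarith) (by linarith) (by linarith)
            rwa [Real.mul_rpow (by norm_num) hlogpos.le] at h2T
          have hB : (1+2*s)^(-α) ≤ (3/2:ℝ)^(-α) * (1+s)^(-α) := by
            have h3 := Real.rpow_le_rpow_of_nonpos
              (show (0:ℝ) < (3/2)*(1+s) by nlinarith)
              (show (3/2:ℝ)*(1+s) ≤ 1+2*s by nlinarith) (by linarith : -α ≤ 0)
            rwa [Real.mul_rpow (by norm_num) (by linarith)] at h3
          gcongr
          nlinarith [mul_nonneg (by linarith : (0:ℝ) ≤ 1 - (3/2:ℝ)^(-α))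
            (by linarith : (0:ℝ) ≤ (1+s)^(-α) - (2:ℝ)^(-α) * T)]
      _ = c₀ * (Haux α b₃ - Haux α b₂) := by rw [hHb₂, hHb₃]; ring
      _ = ∫ r in Ioo b₂ b₃, c₀ * Gaux α r := by
          rw [integral_const_mul, Gaux_integral hα hb₂0.le hb₃1.le hb₂₃.le]
      _ ≤ ∫ r in Ioo b₂ b₃, Fx p α n r :=
          setIntegral_mono_on (hGint23.const_mul c₀) hFint23 measurableSet_Ioo hptw
      _ ≤ ∫ r in Ioo 0 1, Fx p α n r := by
          apply setIntegral_mono_set hFint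
          · rw [EventuallyLE, ae_restrict_iff' measurableSet_Ioo]
            exact ae_of_all _ fun r hr => Fx_nonneg hp n hr.1.le hr.2
          · exact HasSubset.Subset.eventuallyLE hsub
  · -- UPPER BOUND
    have hsucc : Real.log (nn + 1) ≤ 1 + s := by
      rw [hsdef, hnn]; exact log_succ_le (show 1 ≤ n by omega)
    have hd12 : Disjoint (Ioo (0:ℝ) b₁) (Ico b₁ b₂) :=
      Set.disjoint_left.mpr fun x hx hx' => absurd hx.2 (not_lt.mpr hx'.1)
    have hd23 : Disjoint (Ioo (0:ℝ) b₂) (Ico b₂ 1) :=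
      Set.disjoint_left.mpr fun x hx hx' => absurd hx.2 (not_lt.mpr hx'.1)
    have hsubA : Ioo (0:ℝ) b₁ ⊆ Ioo 0 1 := Ioo_subset_Ioo_right hb₁1.le
    have hsubB : Ico b₁ b₂ ⊆ Ioo (0:ℝ) 1 :=
      fun x hx => ⟨lt_of_lt_of_le hb₁0 hx.1, lt_trans hx.2 hb₂1⟩
    have hsubB' : Ico b₁ b₂ ⊆ Ioc (0:ℝ) 1 :=
      fun x hx => ⟨lt_of_lt_of_le hb₁0 hx.1, (lt_trans hx.2 hb₂1).le⟩
    have hsubC : Ico b₂ 1 ⊆ Ioo (0:ℝ) 1 := fun x hx => ⟨lt_of_lt_of_le hb₂0 hx.1, hx.2⟩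
    have hsubC' : Ico b₂ 1 ⊆ Ioc (0:ℝ) 1 :=
      fun x hx => ⟨lt_of_lt_of_le hb₂0 hx.1, hx.2.le⟩
    have hsplit : ∫ r in Ioo (0:ℝ) 1, Fx p α n r =
        (∫ r in Ioo (0:ℝ) b₁, Fx p α n r) + (∫ r in Ico b₁ b₂, Fx p α n r)
          + (∫ r in Ico b₂ 1, Fx p α n r) := by
      rw [← Ioo_union_Ico_eq_Ioo hb₂0 hb₂1.le,
        setIntegral_union hd23 measurableSet_Ico
          (hFint.mono_set (Ioo_subset_Ioo_right hb₂1.le)) (hFint.mono_set hsubC),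
        ← Ioo_union_Ico_eq_Ioo hb₁0 hb₁₂,
        setIntegral_union hd12 measurableSet_Ico
          (hFint.mono_set (hsubA.trans ?_)) (hFint.mono_set hsubB)]
      intro x hx; exact hx
    have hPA : ∫ r in Ioo (0:ℝ) b₁, Fx p α n r ≤ T := by
      have hXnn : 0 ≤ sq * Real.exp (-sq) := by positivity
      have hconst : ∀ r ∈ Ioo (0:ℝ) b₁, Fx p α n r ≤ sq * Real.exp (-sq) := by
        intro r hr
        have hr1 : r < 1 := lt_trans hr.2 hb₁1
        rw [Fx_eq p α n hr1]
        have h1r : 1/sq ≤ 1 - r := by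
          have := hr.2; rw [hb₁def] at this; linarith
        have hre : r ^ (p*(n:ℝ)+1) ≤ Real.exp (-sq) := by
          have h1 : r ^ (p*(n:ℝ)+1) ≤ b₁ ^ (p*(n:ℝ)+1) :=
            Real.rpow_le_rpow hr.1.le hr.2.le (Fx_exp_nonneg hp n)
          have h2 : b₁ ≤ Real.exp (-(1/sq)) := by
            rw [hb₁def]; linarith [Real.add_one_le_exp (-(1/sq))]
          have h3 : b₁ ^ (p*(n:ℝ)+1) ≤ Real.exp (-(1/sq)) ^ (p*(n:ℝ)+1) :=
            Real.rpow_le_rpow hb₁0.le h2 (Fx_exp_nonneg hp n)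
          have h4 : Real.exp (-(1/sq)) ^ (p*(n:ℝ)+1) = Real.exp (-(1/sq) * (p*(n:ℝ)+1)) :=
            (Real.exp_mul _ _).symm
          have hss : sq*sq = nn := Real.mul_self_sqrt (by linarith)
          have h6 : sq * sq ≤ p*nn+1 := by rw [hss]; nlinarith
          have h5 : -(1/sq) * (p*nn+1) ≤ -sq := by
            have h7 : sq ≤ (1/sq) * (p*nn+1) := by
              calc sq = (1/sq)*(sq*sq) := by field_simp
                _ ≤ (1/sq)*(p*nn+1) := by
                    apply mul_le_mul_of_nonneg_left h6 (by positivity)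
            linarith
          calc r ^ (p*(n:ℝ)+1) ≤ Real.exp (-(1/sq)) ^ (p*(n:ℝ)+1) := le_trans h1 h3
            _ = Real.exp (-(1/sq) * (p*(n:ℝ)+1)) := h4
            _ ≤ Real.exp (-sq) := Real.exp_le_exp.mpr h5
        have hGb : Gaux α r ≤ sq * 1 := by
          rw [Gaux]
          have hbp := base_pos hr.1.le hr1
          have h1rpos : (0:ℝ) < 1 - r := lt_of_lt_of_le (by positivity) h1r
          apply mul_le_mul ?_
            (Real.rpow_le_one_of_one_le_of_nonpos hbp (by linarith))
            (Real.rpow_nonneg (by linarith) _) hsq0.le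
          calc (1-r)⁻¹ ≤ (1/sq)⁻¹ := by
                apply inv_anti₀ (by positivity) h1r
            _ = sq := by rw [one_div, inv_inv]
        calc r ^ (p*(n:ℝ)+1) * Gaux α r ≤ Real.exp (-sq) * (sq * 1) :=
              mul_le_mul hre hGb (Gaux_nonneg hr.1.le hr1) (Real.exp_pos _).le
          _ = sq * Real.exp (-sq) := by ring
      have hIA := setIntegral_mono_on (hFint.mono_set hsubA)
        (integrableOn_const measure_Ioo_lt_top.ne) measurableSet_Ioo hconst
      rw [setIntegral_const, smul_eq_mul, Real.volume_real_Ioo_of_le hb₁0.le, sub_zero] at hIA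
      have hse : sq * Real.exp (-sq) ≤ T := by
        have hLa : 0 < Real.log (nn+1) ^ α := Real.rpow_pos_of_pos hlogpos α
        rw [hT, Real.rpow_neg hlogpos.le]
        calc sq * Real.exp (-sq)
            = sq * Real.exp (-sq) * (Real.log (nn+1)^α) / (Real.log (nn+1)^α) := by
              field_simp
          _ ≤ 1 / (Real.log (nn+1)^α) := by gcongr
          _ = (Real.log (nn+1)^α)⁻¹ := one_div _
      calc ∫ r in Ioo (0:ℝ) b₁, Fx p α n r ≤ b₁ * (sq * Real.exp (-sq)) := hIA
        _ ≤ 1 * (sq * Real.exp (-sq)) := by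
            apply mul_le_mul_of_nonneg_right hb₁1.le hXnn
        _ ≤ T := by rw [one_mul]; exact hse
    have hPB : ∫ r in Ico b₁ b₂, Fx p α n r ≤ 2^α/α * T := by
      have h1 : ∫ r in Ico b₁ b₂, Fx p α n r ≤ ∫ r in Ico b₁ b₂, Gaux α r :=
        setIntegral_mono_on (hFint.mono_set hsubB) (hGint.mono_set hsubB')
          measurableSet_Ico
          (fun r hr => Fx_le_Gaux hp n (hsubB hr).1.le (hsubB hr).2)
      have h2 : ∫ r in Ico b₁ b₂, Gaux α r = Haux α b₂ - Haux α b₁ := by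
        rw [integral_Ico_eq_integral_Ioo, Gaux_integral hα hb₁0.le hb₂1.le hb₁₂]
      have h3 : Haux α b₂ ≤ 0 := by
        rw [hHb₂]
        apply div_nonpos_of_nonpos_of_nonneg _ hα.le
        simp [Real.rpow_nonneg (show (0:ℝ) ≤ 1+s by linarith) (-α)]
      have h4 : -Haux α b₁ ≤ 2^α/α * T := by
        rw [hHb₁, neg_div, neg_neg]
        have h5 : (1+s/2)^(-α) ≤ 2^α * T := by
          have h6 : (1+s/2:ℝ)^(-α) ≤ (Real.log (nn+1)/2)^(-α) :=
            Real.rpow_le_rpow_of_nonpos (by linarith) (by linarith) (by linarith)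
          have h7 : (Real.log (nn+1)/2)^(-α) = T / (2:ℝ)^(-α) := by
            rw [hT, Real.div_rpow hlogpos.le (by norm_num)]
          have h8 : T / (2:ℝ)^(-α) = 2^α * T := by
            rw [Real.rpow_neg (by norm_num : (0:ℝ) ≤ 2), div_eq_mul_inv, inv_inv]
            ring
          rw [h7, h8] at h6; exact h6
        calc (1+s/2)^(-α)/α ≤ (2^α*T)/α := by
              exact (div_le_div_iff_of_pos_right hα).mpr h5
          _ = 2^α/α*T := by ring
      linarith [h1, h2.le, h2.ge]
    have hPC : ∫ r in Ico b₂ 1, Fx p α n r ≤ 1/α * T := by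
      have h1 : ∫ r in Ico b₂ 1, Fx p α n r ≤ ∫ r in Ico b₂ 1, Gaux α r :=
        setIntegral_mono_on (hFint.mono_set hsubC) (hGint.mono_set hsubC')
          measurableSet_Ico
          (fun r hr => Fx_le_Gaux hp n (hsubC hr).1.le (hsubC hr).2)
      have h2 : ∫ r in Ico b₂ 1, Gaux α r = Haux α 1 - Haux α b₂ := by
        rw [integral_Ico_eq_integral_Ioo, Gaux_integral hα hb₂0.le (le_refl 1) hb₂1.le]
      have h3 : Haux α 1 - Haux α b₂ = (1+s)^(-α)/α := by
        rw [Haux_one, hHb₂]; ring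
      have h4 : (1+s)^(-α) ≤ T := by
        rw [hT]
        exact Real.rpow_le_rpow_of_nonpos hlogpos hsucc (by linarith)
      calc ∫ r in Ico b₂ 1, Fx p α n r ≤ (1+s)^(-α)/α := by rw [← h3, ← h2]; exact h1
        _ ≤ T/α := by
            exact (div_le_div_iff_of_pos_right hα).mpr h4
        _ = 1/α * T := by ring
    calc ∫ r in Ioo (0:ℝ) 1, Fx p α n r
        = (∫ r in Ioo (0:ℝ) b₁, Fx p α n r) + (∫ r in Ico b₁ b₂, Fx p α n r)
          + (∫ r in Ico b₂ 1, Fx p α n r) := hsplit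
      _ ≤ T + 2^α/α * T + 1/α * T := by linarith [hPA, hPB, hPC]
      _ = (1 + 2^α/α + 1/α) * T := by ring
end
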